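/- arXiv:1607.04327 — 3 statements merged into one kernel-verified Lean document; each statement's English description precedes it below -/
import Mathlib

section
/- Let τ, τ̃ : {1,...,m} → [0,1] be threshold functions and let h, h̃ be the corresponding step-up procedures. Then the step-up procedure with threshold function i ↦ max(τ(i), τ̃(i)) rejects exactly the union h(p) ∪ h̃(p) for every p ∈ [0,1]^m, provided τ and τ̃ are non-decreasing in i. -/
/-- The step-up procedure with threshold function `τ`: hypothesis `i` is rejected
iff `p i ≤ max { p₍ⱼ₎ : p₍ⱼ₎ ≤ τ j }`, where `p₍ⱼ₎ = p (Tuple.sort p j)` is the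
`j`-th order statistic; nothing is rejected when the set `{ j : p₍ⱼ₎ ≤ τ j }`
is empty. -/
def stepUp {m : ℕ} (τ : Fin m → ℝ) (p : Fin m → ℝ) : Set (Fin m) :=
  {i | ∃ j : Fin m, p (Tuple.sort p j) ≤ τ j ∧ p i ≤ p (Tuple.sort p j)}

/-- The step-up procedure with threshold  computes the union of
the step-up procedures with thresholds  and . -/
theorem stepUp_max_eq_union {m : ℕ} (τ τ' : Fin m → ℝ)
    (hτ : Monotone τ) (hτ' : Monotone τ')
    (hτr : ∀ i, τ i ∈ Set.Icc (0:ℝ) 1) (hτ'r : ∀ i, τ' i ∈ Set.Icc (0:ℝ) 1)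
    (p : Fin m → ℝ) (hp : ∀ i, p i ∈ Set.Icc (0:ℝ) 1) :
    stepUp (fun i => max (τ i) (τ' i)) p = stepUp τ p ∪ stepUp τ' p := by
  ext i
  constructor
  · rintro ⟨j, hj, hi⟩
    rcases le_max_iff.mp hj with h | h
    · exact Or.inl ⟨j, h, hi⟩
    · exact Or.inr ⟨j, h, hi⟩
  · rintro (⟨j, hj, hi⟩ | ⟨j, hj, hi⟩)
    · exact ⟨j, le_max_of_le_left hj, hi⟩
    · exact ⟨j, le_max_of_le_right hj, hi⟩
end

section
/- Let τ : {1,...,m} → [0,1] be a non-decreasing threshold function and h the corresponding step-up procedure (for fixed α). Then h is monotonic: for all p, q ∈ [0,1]^m with q ≤ p coordinatewise, h(p) ⊆ h(q). -/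
/-!
Counting how many p-values lie below a level describes the step-up procedure without the sorting
permutation: `i` is rejected iff `pᵢ ≤ τ j` for some `j` with more than `j` p-values below `τ j`.
Both conditions only become easier to satisfy when the p-values decrease.
-/

open Finset

theorem Finset.card_filter_univ_comp_equiv {α β : Type*} [Fintype α] [Fintype β] (e : α ≃ β)
    (P : β → Prop) [DecidablePred P] : #{a | P (e a)} = #{b | P b} := by
  rw [← map_univ_equiv e, filter_map, card_map]
  rfl

theorem Tuple.apply_sort_le_iff_lt_card {n : ℕ} {α : Type*} [LinearOrder α] (f : Fin n → α)
    (a : α) (j : Fin n) : f (sort f j) ≤ a ↔ (j : ℕ) < #{i | f i ≤ a} := by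
  rw [← card_filter_univ_comp_equiv (sort f) (f · ≤ a)]
  exact (lt_card_le_iff_apply_le_of_monotone (monotone_sort f)).symm

theorem mem_stepUp_iff {m : ℕ} {τ : Fin m → ℝ} (hτ : Monotone τ) {p : Fin m → ℝ} {i : Fin m} :
    i ∈ stepUp τ p ↔ ∃ j : Fin m, p i ≤ τ j ∧ (j : ℕ) < #{k | p k ≤ τ j} := by
  constructor
  · rintro ⟨j, hj, hij⟩
    exact ⟨j, hij.trans hj, (Tuple.apply_sort_le_iff_lt_card p _ j).1 hj⟩
  · rintro ⟨j, hij, hj⟩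
    set σ := Tuple.sort p
    -- The sorted position of `i` also lies below the count, so `max (σ⁻¹ i) j` is a witness.
    have hi : ((σ.symm i : Fin m) : ℕ) < #{k | p k ≤ τ j} := by
      rw [← Tuple.apply_sort_le_iff_lt_card, Equiv.apply_symm_apply]
      exact hij
    have hmax : p (σ (max (σ.symm i) j)) ≤ τ j := by
      rw [Tuple.apply_sort_le_iff_lt_card, Fin.coe_max]
      exact max_lt hi hj
    refine ⟨max (σ.symm i) j, hmax.trans (hτ le_sup_right), ?_⟩
    calc p i = p (σ (σ.symm i)) := by rw [Equiv.apply_symm_apply]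
      _ ≤ p (σ (max (σ.symm i) j)) := Tuple.monotone_sort p le_sup_left

theorem stepUp_monotonic_general {m : ℕ} (τ : Fin m → ℝ) (hτ : Monotone τ)
    (p q : Fin m → ℝ) (hqp : ∀ i, q i ≤ p i) :
    stepUp τ p ⊆ stepUp τ q := by
  intro i hi
  obtain ⟨j, hij, hj⟩ := (mem_stepUp_iff hτ).1 hi
  have hcount : #{k | p k ≤ τ j} ≤ #{k | q k ≤ τ j} :=
    card_le_card (monotone_filter_right _ fun k _ hk => (hqp k).trans hk)
  exact (mem_stepUp_iff hτ).2 ⟨j, (hqp i).trans hij, hj.trans_le hcount⟩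

/-- A step-up procedure with a non-decreasing threshold function is monotonic:
lowering p-values coordinatewise can only yield more rejections. -/
theorem stepUp_monotonic {m : ℕ} (τ : Fin m → ℝ) (hτ : Monotone τ)
    (hτr : ∀ i, τ i ∈ Set.Icc (0:ℝ) 1)
    (p q : Fin m → ℝ) (hp : ∀ i, p i ∈ Set.Icc (0:ℝ) 1)
    (hq : ∀ i, q i ∈ Set.Icc (0:ℝ) 1) (hqp : ∀ i, q i ≤ p i) :
    stepUp τ p ⊆ stepUp τ q :=
  stepUp_monotonic_general τ hτ p q hqp
end

section
/- Let τ : {1,...,m} → [0,1] be a non-decreasing threshold function and h the corresponding step-down procedure (for fixed α). Then h is monotonic: for all p, q ∈ [0,1]^m with q ≤ p coordinatewise, h(p) ⊆ h(q). -/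
/-- The step-down procedure with threshold function `τ` (everything rejected when no
order statistic lies above its threshold). -/
def stepDown {m : ℕ} (τ : Fin m → ℝ) (p : Fin m → ℝ) : Set (Fin m) :=
  {i | ∀ j : Fin m, τ j < p (Tuple.sort p j) → p i < p (Tuple.sort p j)}

/-- A step-down procedure with a non-decreasing threshold function is monotonic:
lowering p-values coordinatewise can only yield more rejections. -/
theorem stepDown_monotonic {m : ℕ} (τ : Fin m → ℝ) (hτ : Monotone τ)
    (hτr : ∀ i, τ i ∈ Set.Icc (0:ℝ) 1)
    (p q : Fin m → ℝ) (hp : ∀ i, p i ∈ Set.Icc (0:ℝ) 1)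
    (hq : ∀ i, q i ∈ Set.Icc (0:ℝ) 1) (hqp : ∀ i, q i ≤ p i) :
    stepDown τ p ⊆ stepDown τ q := by
  intro i hi j hj
  by_contra hcon
  push_neg at hcon
  set σp := Tuple.sort p with hσp
  set σq := Tuple.sort q with hσq
  -- the set of indices whose q-value is at least the j-th order statistic of q
  set B : Finset (Fin m) := Finset.univ.filter (fun s => q (σq j) ≤ q s) with hB
  have hiB : i ∈ B := by simp [hB, hcon]
  set K : Finset (Fin m) := Finset.univ.filter (fun k => σp k ∈ B) with hK
  have hK_ne : K.Nonempty := ⟨σp.symm i, by simp [hK, hiB]⟩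
  set k0 := K.min' hK_ne with hk0
  have hk0K : k0 ∈ K := K.min'_mem hK_ne
  have hk0B : q (σq j) ≤ q (σp k0) := by
    have := (Finset.mem_filter.mp hk0K).2
    simpa [hB] using this
  have hk0j : k0 ≤ j := by
    by_contra hlt
    push_neg at hlt
    have hmap : ∀ k ∈ Finset.Ici j, σp.symm (σq k) ∈ Finset.Ioi j := by
      intro k hk
      have hkj : j ≤ k := Finset.mem_Ici.mp hk
      have hqk : q (σq j) ≤ q (σq k) := Tuple.monotone_sort q hkj
      have hmem : σp.symm (σq k) ∈ K := by
        simp [hK, hB, hqk]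
      have := K.min'_le _ hmem
      exact Finset.mem_Ioi.mpr (lt_of_lt_of_le hlt this)
    have hinj : Set.InjOn (fun k => σp.symm (σq k)) (Finset.Ici j) := by
      intro a _ b _ hab
      simpa using hab
    have hcard := Finset.card_le_card_of_injOn _ hmap hinj
    rw [Fin.card_Ici, Fin.card_Ioi] at hcard
    omega
  have hτk0 : τ k0 < p (σp k0) :=
    lt_of_le_of_lt (hτ hk0j) (lt_of_lt_of_le hj (le_trans hk0B (hqp _)))
  have hpi : p i < p (σp k0) := hi k0 hτk0
  have hiK : σp.symm i ∈ K := by simp [hK, hiB]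
  have : p (σp k0) ≤ p i := by
    have h1 : p (σp k0) ≤ p (σp (σp.symm i)) :=
      Tuple.monotone_sort p (K.min'_le _ hiK)
    simpa using h1
  linarith
end
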